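/- arXiv:1112.0799 — 3 statements merged into one kernel-verified Lean document; each statement's English description precedes it below -/
import Mathlib

section
/- The lexicographic order on the power set of ℕ is a complete lattice: every subset of 2^ℕ has a supremum (and an infimum) with respect to the lexicographic order. -/
/-!
The supremum of `S` is built greedily: `n` belongs to it iff some member of `S` contains `n`
and agrees with the part of the supremum already built below `n`. If a member `J` of `S`
contains some `n` outside the supremum, then `J` and the supremum first disagree at some
`m < n`, and `m` lies in the supremum, since otherwise the greedy rule would have put `m`
into it; so `J` is below the supremum. Complementation reverses the order, so infima are
complements of suprema of complements.
-/

/-- The lexicographic order on the power set of `ℕ`: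
`I ≤ J` iff `inf (J \ I) ≤ inf (I \ J)`, where the infimum of the empty set is `∞`. -/
def lexLE (I J : Set ℕ) : Prop :=
  (⨅ n ∈ J \ I, (n : ℕ∞)) ≤ ⨅ n ∈ I \ J, (n : ℕ∞)

/-- `I` is a supremum of `S` with respect to the lexicographic order. -/
def lexIsLUB (S : Set (Set ℕ)) (I : Set ℕ) : Prop :=
  (∀ J ∈ S, lexLE J I) ∧ ∀ K : Set ℕ, (∀ J ∈ S, lexLE J K) → lexLE I K

/-- `I` is an infimum of `S` with respect to the lexicographic order. -/
def lexIsGLB (S : Set (Set ℕ)) (I : Set ℕ) : Prop :=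
  (∀ J ∈ S, lexLE I J) ∧ ∀ K : Set ℕ, (∀ J ∈ S, lexLE K J) → lexLE K I

theorem ENat.biInf_natCast_le_biInf_natCast_iff {s t : Set ℕ} :
    (⨅ m ∈ s, (m : ℕ∞)) ≤ ⨅ n ∈ t, (n : ℕ∞) ↔ ∀ n ∈ t, ∃ m ∈ s, m ≤ n := by
  constructor
  · intro h n hn
    have hs : s.Nonempty := by
      by_contra! hs
      simpa [hs] using h.trans (iInf₂_le n hn)
    rw [← ENat.natCast_sInf hs] at h
    exact ⟨sInf s, Nat.sInf_mem hs, by exact_mod_cast h.trans (iInf₂_le n hn)⟩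
  · intro h
    rcases t.eq_empty_or_nonempty with rfl | ht
    · simp
    obtain ⟨m, hm, hmt⟩ := h _ (Nat.sInf_mem ht)
    rw [← ENat.natCast_sInf ht]
    exact (iInf₂_le m hm).trans (by exact_mod_cast hmt)

theorem lexLE_iff {I J : Set ℕ} : lexLE I J ↔ ∀ n ∈ I \ J, ∃ m ∈ J \ I, m < n := by
  rw [lexLE, ENat.biInf_natCast_le_biInf_natCast_iff]
  refine forall₂_congr fun n hn => exists_congr fun m => and_congr_right fun hm =>
    ⟨fun hmn => hmn.lt_of_ne ?_, le_of_lt⟩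
  rintro rfl
  exact hn.2 hm.1

theorem lexLE_compl_compl {I J : Set ℕ} : lexLE Iᶜ Jᶜ ↔ lexLE J I := by
  rw [lexLE, lexLE, compl_sdiff_compl, compl_sdiff_compl]

def lexSup (S : Set (Set ℕ)) : Set ℕ
  | n => ∃ J ∈ S, n ∈ J ∧ ∀ m < n, (m ∈ J ↔ lexSup S m)
termination_by n => n

theorem mem_lexSup {S : Set (Set ℕ)} {n : ℕ} :
    n ∈ lexSup S ↔ ∃ J ∈ S, n ∈ J ∧ ∀ m < n, (m ∈ J ↔ m ∈ lexSup S) := by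
  show lexSup S n ↔ _
  rw [lexSup]
  rfl

theorem lexLE_lexSup {S : Set (Set ℕ)} {J : Set ℕ} (hJ : J ∈ S) : lexLE J (lexSup S) := by
  classical
  rw [lexLE_iff]
  rintro n ⟨hnJ, hnS⟩
  have hdiff : ∃ m, m < n ∧ ¬(m ∈ J ↔ m ∈ lexSup S) := by
    by_contra! hagree
    exact hnS (mem_lexSup.2 ⟨J, hJ, hnJ, hagree⟩)
  set m := Nat.find hdiff
  obtain ⟨hmn, hm⟩ := Nat.find_spec hdiff
  have hbelow : ∀ k < m, (k ∈ J ↔ k ∈ lexSup S) := fun k hk =>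
    not_not.1 fun h => Nat.find_min hdiff hk ⟨hk.trans hmn, h⟩
  have hmJ : m ∉ J := fun hmJ => hm (iff_of_true hmJ (mem_lexSup.2 ⟨J, hJ, hmJ, hbelow⟩))
  exact ⟨m, ⟨(not_iff.1 hm).1 hmJ, hmJ⟩, hmn⟩

theorem lexSup_lexLE {S : Set (Set ℕ)} {K : Set ℕ} (hK : ∀ J ∈ S, lexLE J K) :
    lexLE (lexSup S) K := by
  rw [lexLE_iff]
  rintro n ⟨hnS, hnK⟩
  obtain ⟨J, hJ, hnJ, hagree⟩ := mem_lexSup.1 hnS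
  obtain ⟨m, ⟨hmK, hmJ⟩, hmn⟩ := lexLE_iff.1 (hK J hJ) n ⟨hnJ, hnK⟩
  exact ⟨m, ⟨hmK, fun hmS => hmJ ((hagree m hmn).2 hmS)⟩, hmn⟩

theorem lexIsLUB_lexSup (S : Set (Set ℕ)) : lexIsLUB S (lexSup S) :=
  ⟨fun _ => lexLE_lexSup, fun _ => lexSup_lexLE⟩

theorem lexIsGLB_compl_iff {S : Set (Set ℕ)} {I : Set ℕ} :
    lexIsGLB S Iᶜ ↔ lexIsLUB (compl '' S) I := by
  have swap : ∀ A B : Set ℕ, lexLE Aᶜ B ↔ lexLE Bᶜ A := fun A B => by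
    rw [← lexLE_compl_compl, compl_compl]
  simp only [lexIsGLB, lexIsLUB, Set.forall_mem_image, swap]
  refine and_congr Iff.rfl ?_
  rw [compl_surjective.forall]
  simp only [lexLE_compl_compl]

/-- The lexicographically ordered power set of `ℕ` is complete: every subset has a
supremum (and an infimum). -/
theorem lex_complete (S : Set (Set ℕ)) :
    (∃ I : Set ℕ, lexIsLUB S I) ∧ (∃ I : Set ℕ, lexIsGLB S I) :=
  ⟨⟨lexSup S, lexIsLUB_lexSup S⟩,
    ⟨(lexSup (compl '' S))ᶜ, lexIsGLB_compl_iff.2 (lexIsLUB_lexSup _)⟩⟩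
end

section
/- Let A be a ring and let C be a full additive subcategory of the category of finitely generated A-modules that is closed under submodules. Then C equals sub(X_C) where X_C is the direct sum of (representatives of isomorphism classes of) all modules in C; that is, every submodule-closed additive subcategory of f.g. modules is of the form sub X for some (possibly infinitely generated) module X. -/
/-!
Every finitely generated module is a quotient `(Fin n → A) ⧸ K`, so the quotients of this form
lying in `C` represent all isomorphism classes of `C`, and we take `X` to be their direct sum.
A module of `C` is then a summand of `X`. Conversely, the image of a finitely generated module in
`Fin n → X` is spanned by finitely many vectors and hence involves only finitely many summands, so
the module embeds into a finite product of members of `C`; that product lies in `C`, and so does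
the module, `C` being closed under submodules.
-/

open scoped DirectSum

universe u

structure IsClosedUnderFiniteSums {A : Type*} [Ring A]
    (C : (M : Type u) → [AddCommGroup M] → [Module A M] → Prop) : Prop where
  of_linearEquiv : ∀ (M N : Type u) [AddCommGroup M] [Module A M] [AddCommGroup N] [Module A N],
    C M → Nonempty (M ≃ₗ[A] N) → C N
  of_subsingleton : ∀ (M : Type u) [AddCommGroup M] [Module A M], Subsingleton M → C M
  prod : ∀ (M N : Type u) [AddCommGroup M] [Module A M] [AddCommGroup N] [Module A N],
    C M → C N → C (M × N)

theorem IsClosedUnderFiniteSums.pi {A : Type*} [Ring A]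
    {C : (M : Type u) → [AddCommGroup M] → [Module A M] → Prop} (hC : IsClosedUnderFiniteSums C)
    {ι : Type u} [Finite ι] (G : ι → Type u) [∀ i, AddCommGroup (G i)] [∀ i, Module A (G i)]
    (hG : ∀ i, C (G i)) : C ((i : ι) → G i) := by
  induction ι using Finite.induction_empty_option with
  | of_equiv e ih =>
    exact hC.of_linearEquiv _ _ (ih (fun i => G (e i)) fun i => hG (e i))
      ⟨LinearEquiv.piCongrLeft A G e⟩
  | h_empty => exact hC.of_subsingleton _ inferInstance
  | h_option ih =>
    exact hC.of_linearEquiv _ _ (hC.prod _ _ (hG none) (ih _ fun i => hG (some i)))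
      ⟨(LinearEquiv.piOptionEquivProd (R := A)).symm⟩

section FiniteSupport

variable {R : Type*} [Semiring R] {ι : Type*} {F : ι → Type*} [∀ i, AddCommMonoid (F i)]
  [∀ i, Module R (F i)] {M : Type*} [AddCommMonoid M] [Module R M]

theorem DirectSum.exists_finset_map_apply_eq_zero [Module.Finite R M] (f : M →ₗ[R] ⨁ i, F i) :
    ∃ S : Finset ι, ∀ m i, i ∉ S → f m i = 0 := by
  classical
  obtain ⟨s, hs⟩ := Module.finite_def.mp ‹_›
  refine ⟨s.biUnion fun m => (f m).support, fun m i hi => ?_⟩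
  have hm : m ∈ Submodule.span R (s : Set M) := hs ▸ Submodule.mem_top
  induction hm using Submodule.span_induction with
  | mem x hx =>
    by_contra hne
    exact hi (Finset.mem_biUnion.mpr ⟨x, hx, DFinsupp.mem_support_iff.mpr hne⟩)
  | zero => simp
  | add x y _ _ hx hy => simp [hx, hy]
  | smul a x _ hx => rw [map_smul, DirectSum.smul_apply, hx, smul_zero]

theorem DirectSum.exists_finset_injective_pi_of_injective [Module.Finite R M] {κ : Type*}
    [Finite κ] (f : M →ₗ[R] κ → ⨁ i, F i) (hf : Function.Injective f) :
    ∃ (S : Finset ι) (g : M →ₗ[R] (p : κ × S) → F p.2), Function.Injective g := by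
  classical
  have := Fintype.ofFinite κ
  choose S hS using fun a => exists_finset_map_apply_eq_zero (LinearMap.proj a ∘ₗ f)
  refine ⟨Finset.univ.biUnion S,
    LinearMap.pi fun p => DFinsupp.lapply p.2.1 ∘ₗ LinearMap.proj p.1 ∘ₗ f, ?_⟩
  intro m₁ m₂ h
  refine hf (funext fun a => DFinsupp.ext fun i => ?_)
  by_cases hi : i ∈ Finset.univ.biUnion S
  · simpa using congrFun h (a, ⟨i, hi⟩)
  · have hiS : i ∉ S a := fun h => hi (Finset.mem_biUnion.mpr ⟨a, Finset.mem_univ a, h⟩)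
    exact (hS a m₁ i hiS).trans (hS a m₂ i hiS).symm

end FiniteSupport

/-- Every submodule-closed additive class `C` of finitely generated `A`-modules (a class of
f.g. modules closed under isomorphism, submodules, and finite direct sums) is of the form
`sub X` for some `A`-module `X`: `C` consists exactly of the finitely generated modules that
embed into a finite direct sum of copies of `X`.  (One may take `X = X_C`, the direct sum of
representatives of all isomorphism classes of modules in `C`.) -/
theorem submodule_closed_eq_sub {A : Type u} [Ring A]
    (C : (M : Type u) → [AddCommGroup M] → [Module A M] → Prop)
    -- every member of `C` is finitely generated
    (hfg : ∀ (M : Type u) [AddCommGroup M] [Module A M], C M → Module.Finite A M)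
    -- `C` is closed under isomorphism
    (hiso : ∀ (M N : Type u) [AddCommGroup M] [Module A M] [AddCommGroup N] [Module A N],
      C M → Nonempty (M ≃ₗ[A] N) → C N)
    -- `C` is closed under (finitely generated) submodules
    (hsub : ∀ (M N : Type u) [AddCommGroup M] [Module A M] [AddCommGroup N] [Module A N],
      C N → Module.Finite A M → (∃ f : M →ₗ[A] N, Function.Injective f) → C M)
    -- `C` contains the zero module
    (hzero : ∀ (M : Type u) [AddCommGroup M] [Module A M], Subsingleton M → C M)
    -- `C` is closed under finite direct sums
    (hsum : ∀ (M N : Type u) [AddCommGroup M] [Module A M] [AddCommGroup N] [Module A N],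
      C M → C N → C (M × N)) :
    ∃ (X : Type u) (_ : AddCommGroup X) (_ : Module A X),
      ∀ (M : Type u) [AddCommGroup M] [Module A M],
        (C M ↔ Module.Finite A M ∧
          ∃ (n : ℕ) (f : M →ₗ[A] (Fin n → X)), Function.Injective f) := by
  let ι : Type u := Σ n : ℕ, {K : Submodule A (Fin n → A) // C ((Fin n → A) ⧸ K)}
  let F : ι → Type u := fun i => (Fin i.1 → A) ⧸ i.2.1
  have hF : ∀ i, C (F i) := fun i => i.2.2
  refine ⟨⨁ i, F i, inferInstance, inferInstance, fun M _ _ => ⟨fun hM => ?_, ?_⟩⟩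
  · have hMfin := hfg M hM
    obtain ⟨n, φ, hφ⟩ := Module.Finite.exists_fin' A M
    let e : ((Fin n → A) ⧸ LinearMap.ker φ) ≃ₗ[A] M := φ.quotKerEquivOfSurjective hφ
    let i : ι := ⟨n, LinearMap.ker φ, hiso M _ hM ⟨e.symm⟩⟩
    let u := (LinearEquiv.funUnique (Fin 1) A (⨁ i, F i)).symm
    refine ⟨hMfin, 1, u.toLinearMap ∘ₗ DirectSum.lof A ι F i ∘ₗ e.symm.toLinearMap, ?_⟩
    exact u.injective.comp ((DirectSum.of_injective (β := F) i).comp e.symm.injective)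
  · rintro ⟨hM, n, f, hf⟩
    obtain ⟨S, g, hg⟩ := DirectSum.exists_finset_injective_pi_of_injective f hf
    have hC : IsClosedUnderFiniteSums C := ⟨hiso, hzero, hsum⟩
    exact hsub M _ (hC.pi (fun p : Fin n × S => F p.2) fun p => hF p.2) hM ⟨g, hg⟩
end

section
/- Let A be an Artin algebra and C ⊆ mod A an additive subcategory closed under submodules. An A-module Y is a filtered colimit of modules in C if and only if every finitely presented (equivalently, finitely generated) submodule of Y belongs to C. -/
/-
Over an Artin algebra every finitely generated module is Noetherian. If `Y = colim F` is a
filtered colimit, a finitely generated `N ≤ Y` lies in the image of some `F j`; the kernel of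
`F j → Y` is finitely generated, so it already dies in some `F k`, and then the image in `F k` of
the preimage of `N` maps isomorphically onto `N`. Thus `N` embeds into `F k ∈ C`. Conversely,
`Y` is the directed union of its finitely generated submodules.
-/

universe u

open CategoryTheory

variable (A : Type u) [Ring A]

/-- `C` is a full additive subcategory of `mod A` closed under submodules: a class of
finitely generated modules containing the zero modules, closed under (finitely generated)
submodules (hence under isomorphism) and finite direct sums. -/
def IsSubmoduleClosedSubcat (C : Set (ModuleCat.{u} A)) : Prop :=
  (∀ M ∈ C, Module.Finite A M) ∧
  (∀ M : ModuleCat.{u} A, Module.Finite A M → Subsingleton M → M ∈ C) ∧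
  (∀ M N : ModuleCat.{u} A, N ∈ C → Module.Finite A M →
    (∃ f : M →ₗ[A] N, Function.Injective f) → M ∈ C) ∧
  (∀ M N : ModuleCat.{u} A, M ∈ C → N ∈ C → ModuleCat.of A (↑M × ↑N) ∈ C)

/-- A presentation of the module `Y` as a filtered colimit of modules in the class `C`. -/
structure FilteredColimitPresentation (C : Set (ModuleCat.{u} A)) (Y : ModuleCat.{u} A) where
  /-- the filtered index category -/
  J : Type u
  [instCat : SmallCategory J]
  [instFiltered : IsFiltered J]
  /-- the diagram, with values in `C` -/
  F : J ⥤ ModuleCat.{u} A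
  mem : ∀ j : J, F.obj j ∈ C
  /-- a colimit cocone over the diagram -/
  cocone : Limits.Cocone F
  isColimit : Limits.IsColimit cocone
  /-- whose vertex is the module `Y` -/
  iso : cocone.pt ≅ Y

variable {A}

theorem Submodule.FG.exists_le_of_le_iSup {R M : Type*} [Semiring R] [AddCommMonoid M]
    [Module R M] {ι : Type*} [Nonempty ι] {N : Submodule R M} (hN : N.FG) {p : ι → Submodule R M}
    (hp : Directed (· ≤ ·) p) (hle : N ≤ ⨆ i, p i) : ∃ i, N ≤ p i := by
  obtain ⟨_, ⟨i, rfl⟩, hi⟩ := (CompleteLattice.isCompactElement_iff_le_of_directed_sSup_le _ _).1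
    ((Submodule.fg_iff_compact N).1 hN) _ (Set.range_nonempty p) hp.directedOn_range hle
  exact ⟨i, hi⟩

namespace CategoryTheory.Limits.Cocone

variable {J : Type u} [SmallCategory J] {F : J ⥤ ModuleCat.{u} A} (c : Cocone F)

theorem range_ι_app_le {i j : J} (f : i ⟶ j) :
    LinearMap.range (c.ι.app i).hom ≤ LinearMap.range (c.ι.app j).hom := by
  rw [← c.w f, ModuleCat.hom_comp]
  exact LinearMap.range_comp_le_range _ _

variable [IsFiltered J] {c}

theorem exists_le_range_ι_app_of_fg (hc : IsColimit c) {N : Submodule A c.pt} (hN : N.FG) :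
    ∃ j, N ≤ LinearMap.range (c.ι.app j).hom := by
  have : Nonempty J := IsFiltered.nonempty
  refine hN.exists_le_of_le_iSup (fun i j => ⟨IsFiltered.max i j,
    c.range_ι_app_le (IsFiltered.leftToMax i j), c.range_ι_app_le (IsFiltered.rightToMax i j)⟩)
    fun y _ => ?_
  obtain ⟨j, x, rfl⟩ := Concrete.isColimit_exists_rep F hc y
  exact Submodule.mem_iSup_of_mem j ⟨x, rfl⟩

theorem exists_le_ker_map_of_fg (hc : IsColimit c) {j : J} {K : Submodule A (F.obj j)}
    (hK : K.FG) (hKc : K ≤ LinearMap.ker (c.ι.app j).hom) :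
    ∃ (k : J) (τ : j ⟶ k), K ≤ LinearMap.ker (F.map τ).hom := by
  let p : (Σ k, j ⟶ k) → Submodule A (F.obj j) := fun τ => LinearMap.ker (F.map τ.2).hom
  have hmono : ∀ {k l : J} (τ : j ⟶ k) (g : k ⟶ l), p ⟨k, τ⟩ ≤ p ⟨l, τ ≫ g⟩ := by
    intro k l τ g
    simp only [p, F.map_comp, ModuleCat.hom_comp]
    exact LinearMap.ker_le_ker_comp _ _
  have hdir : Directed (· ≤ ·) p := by
    rintro ⟨k₁, τ₁⟩ ⟨k₂, τ₂⟩
    let u := IsFiltered.leftToMax k₁ k₂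
    let v := IsFiltered.rightToMax k₁ k₂
    let e := IsFiltered.coeqHom (τ₁ ≫ u) (τ₂ ≫ v)
    refine ⟨⟨_, τ₁ ≫ u ≫ e⟩, hmono τ₁ (u ≫ e), ?_⟩
    rw [← Category.assoc, IsFiltered.coeq_condition, Category.assoc]
    exact hmono τ₂ (v ≫ e)
  have : Nonempty (Σ k, j ⟶ k) := ⟨⟨j, 𝟙 j⟩⟩
  suffices K ≤ ⨆ τ, p τ from (hK.exists_le_of_le_iSup hdir this).elim fun τ h => ⟨_, τ.2, h⟩
  intro x hx
  have hx0 : c.ι.app j x = c.ι.app j 0 := by rw [map_zero]; exact hKc hx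
  obtain ⟨k, τ, τ', hττ'⟩ := Concrete.isColimit_exists_of_rep_eq F hc x 0 hx0
  exact Submodule.mem_iSup_of_mem ⟨k, τ⟩ (hττ'.trans (map_zero _))

theorem exists_injective_of_fg [∀ j, IsNoetherian A (F.obj j)] (hc : IsColimit c)
    {N : Submodule A c.pt} (hN : N.FG) :
    ∃ (k : J) (f : N →ₗ[A] F.obj k), Function.Injective f := by
  obtain ⟨j, hj⟩ := exists_le_range_ι_app_of_fg hc hN
  obtain ⟨k, τ, hτ⟩ := exists_le_ker_map_of_fg hc (IsNoetherian.noetherian _) le_rfl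
  have hfac : (c.ι.app k).hom ∘ₗ (F.map τ).hom = (c.ι.app j).hom := by
    rw [← ModuleCat.hom_comp, c.w τ]
  let M := (N.comap (c.ι.app j).hom).map (F.map τ).hom
  have hinj : Function.Injective ((c.ι.app k).hom ∘ₗ M.subtype) := by
    rw [← LinearMap.ker_eq_bot, LinearMap.ker_eq_bot']
    rintro ⟨_, z, -, rfl⟩ (hz : (c.ι.app k).hom ((F.map τ).hom z) = 0)
    have : z ∈ LinearMap.ker (c.ι.app j).hom := by
      rw [LinearMap.mem_ker, ← hfac]
      exact hz
    exact Subtype.ext (hτ this)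
  have hrange : LinearMap.range ((c.ι.app k).hom ∘ₗ M.subtype) = N := by
    rw [LinearMap.range_comp, Submodule.range_subtype, ← Submodule.map_comp, hfac,
      Submodule.map_comap_eq_of_le hj]
  let e : M ≃ₗ[A] N := (LinearEquiv.ofInjective _ hinj).trans (LinearEquiv.ofEq _ _ hrange)
  exact ⟨k, M.subtype ∘ₗ e.symm.toLinearMap, M.injective_subtype.comp e.symm.injective⟩

end CategoryTheory.Limits.Cocone

namespace FilteredColimitPresentation

variable {C : Set (ModuleCat.{u} A)} {Y : ModuleCat.{u} A}

theorem mem_of_finite [IsNoetherianRing A] (hC : IsSubmoduleClosedSubcat A C)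
    (P : FilteredColimitPresentation A C Y) {N : Submodule A Y} (hN : Module.Finite A N) :
    ModuleCat.of A N ∈ C := by
  let _ := P.instCat
  have := P.instFiltered
  have : ∀ j, IsNoetherian A (P.F.obj j) := fun j =>
    have := hC.1 _ (P.mem j); inferInstance
  obtain ⟨k, f, hf⟩ := Limits.Cocone.exists_injective_of_fg (P.isColimit.extendIso P.iso.hom)
    (Module.Finite.iff_fg.1 hN)
  exact hC.2.2.1 _ _ (P.mem k) hN ⟨f, hf⟩

noncomputable def ofFGSubmodules
    (h : ∀ N : Submodule A Y, Module.Finite A N → ModuleCat.of A N ∈ C) :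
    FilteredColimitPresentation A C Y := by
  classical
  exact
    { J := {N : Submodule A Y // N.FG}
      F := ModuleCat.directLimitDiagram _ (Module.fgSystem A Y)
      mem := fun N => h N.1 (Module.Finite.iff_fg.2 N.2)
      cocone := ModuleCat.directLimitCocone _ _
      isColimit := ModuleCat.directLimitIsColimit _ _
      iso := (Module.fgSystem.equiv A Y).toModuleIso }

end FilteredColimitPresentation

/-- Let `A` be an Artin algebra and `C ⊆ mod A` an additive subcategory closed under
submodules.  A module `Y` is a filtered colimit of modules in `C` iff every finitely
generated submodule of `Y` belongs to `C`. -/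
theorem filtered_colimit_iff_fg_submodules
    {R : Type u} [CommRing R] [IsArtinianRing R]
    {A : Type u} [Ring A] [Algebra R A] [Module.Finite R A]
    (C : Set (ModuleCat.{u} A)) (hC : IsSubmoduleClosedSubcat A C)
    (Y : ModuleCat.{u} A) :
    Nonempty (FilteredColimitPresentation A C Y) ↔
      ∀ N : Submodule A Y, Module.Finite A N → ModuleCat.of A N ∈ C := by
  have : IsNoetherianRing A := isNoetherian_of_tower R inferInstance
  exact ⟨fun ⟨P⟩ _ hN => P.mem_of_finite hC hN, fun h => ⟨.ofFGSubmodules h⟩⟩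
end
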